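/- arXiv:1803.10267 — 2 statements merged into one kernel-verified Lean document; each statement's English description precedes it below -/
import Mathlib

section
/- For all t ≥ 0, with f(t) = e^{-t} + e^{1-e^{-t}} - 1, the root r₁(t) = (f(t) + √(f(t)² + 4))/2 satisfies r₁(t) ≥ ((e-1+√((e-1)²+4))/2)·(1 - e^{-t}). -/
open Real

theorem stmt_13 (f r₁ : ℝ → ℝ)
    (hf : ∀ t, f t = Real.exp (-t) + Real.exp (1 - Real.exp (-t)) - 1)
    (hr : ∀ t, r₁ t = (f t + Real.sqrt ((f t) ^ 2 + 4)) / 2) :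
    ∀ t : ℝ, 0 ≤ t →
      ((Real.exp 1 - 1 + Real.sqrt ((Real.exp 1 - 1) ^ 2 + 4)) / 2) * (1 - Real.exp (-t))
        ≤ r₁ t := by
  intro t ht
  set s : ℝ := 1 - Real.exp (-t) with hs
  have hexppos := Real.exp_pos (-t)
  have hexple : Real.exp (-t) ≤ 1 := Real.exp_le_one_iff.mpr (by linarith)
  have hs0 : 0 ≤ s := by simp [hs]; linarith
  have hs1 : s ≤ 1 := by simp [hs]; linarith
  have hfe : f t = Real.exp s - s := by
    rw [hf]
    have h1 : 1 - Real.exp (-t) = s := rfl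
    rw [h1]; simp only [hs]; ring
  set E : ℝ := Real.exp 1 - 1 with hE
  set D : ℝ := Real.sqrt (E ^ 2 + 4) with hD
  have hD0 : 0 ≤ D := Real.sqrt_nonneg _
  have hD2 : D ^ 2 = E ^ 2 + 4 := Real.sq_sqrt (by positivity)
  set c : ℝ := (E + D) / 2 with hc
  have hE0 : 0 ≤ E := by
    have h := Real.add_one_le_exp (1:ℝ); simp only [hE]; linarith
  have hc0 : 0 ≤ c := by positivity
  have hc2 : c ^ 2 = E * c + 1 := by
    rw [hc]; nlinarith [hD2]
  -- exp 1 * s ≤ exp s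
  have hes : Real.exp 1 * s ≤ Real.exp s := by
    have h1 : s ≤ Real.exp (s - 1) := by
      have := Real.add_one_le_exp (s - 1); linarith
    have h2 : Real.exp 1 * Real.exp (s - 1) = Real.exp s := by
      rw [← Real.exp_add]; ring_nf
    calc Real.exp 1 * s ≤ Real.exp 1 * Real.exp (s - 1) :=
          mul_le_mul_of_nonneg_left h1 (Real.exp_pos 1).le
      _ = Real.exp s := h2
  have hkey : (c * s) ^ 2 - f t * (c * s) - 1 ≤ 0 := by
    rw [hfe]
    have h3 : c * s * (Real.exp 1 * s) ≤ c * s * Real.exp s :=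
      mul_le_mul_of_nonneg_left hes (mul_nonneg hc0 hs0)
    nlinarith [hc2, hs0, hs1, hc0, mul_nonneg hc0 hs0, sq_nonneg s,
      mul_le_mul_of_nonneg_left hs1 (mul_nonneg hc0 hs0)]
  have h1 : (2 * (c * s) - f t) ^ 2 ≤ f t ^ 2 + 4 := by nlinarith [hkey]
  have h2 : 2 * (c * s) - f t ≤ Real.sqrt (f t ^ 2 + 4) := by
    calc 2 * (c * s) - f t ≤ |2 * (c * s) - f t| := le_abs_self _
      _ = Real.sqrt ((2 * (c * s) - f t) ^ 2) := (Real.sqrt_sq_eq_abs _).symm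
      _ ≤ Real.sqrt (f t ^ 2 + 4) := Real.sqrt_le_sqrt h1
  rw [hr]
  show c * s ≤ (f t + Real.sqrt (f t ^ 2 + 4)) / 2
  clear_value s E D c
  linarith [h2]
end

section
/- Comparison lemma: if u, û : [0,∞) → ℝ are differentiable with u(0) = û(0) = 0, u'(t) = -(u(t) - r₁(t))(u(t) - r₂(t)), û'(t) = -(û(t) - r̂(t))·(√2 - 1), where r₁(t) ≥ r̂(t) and u(t) - r₂(t) ≥ √2 - 1 for all t ≥ 0, and u ≤ r₁ pointwise, then û(t) ≤ u(t) for all t ≥ 0. -/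
/-!
The difference `w = û - u` vanishes at `0` and satisfies `w' ≤ -(√2 - 1) w`: since `u ≤ r₁` and
`u - r₂ ≥ √2 - 1`, the quadratic rate `(r₁ - u)(u - r₂)` dominates the linear rate `(r₁ - u)(√2 - 1)`,
and `r̂ ≤ r₁` absorbs the rest. Hence `e^{(√2 - 1)t} w(t)` is antitone, so `w ≤ 0`.
-/

open Real Set

theorem nonpos_of_hasDerivAt_le_neg_mul {w w' : ℝ → ℝ} (K : ℝ)
    (hw : ∀ t ≥ (0:ℝ), HasDerivAt w (w' t) t) (hbound : ∀ t ≥ (0:ℝ), w' t ≤ -K * w t)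
    (h0 : w 0 ≤ 0) : ∀ t ≥ (0:ℝ), w t ≤ 0 := by
  have hderiv : ∀ t ≥ (0:ℝ),
      HasDerivAt (fun s ↦ exp (K * s) * w s) (exp (K * t) * (K * w t + w' t)) t := by
    intro t ht
    have hexp : HasDerivAt (fun s ↦ exp (K * s)) (exp (K * t) * K) t := by
      simpa using ((hasDerivAt_id t).const_mul K).exp
    exact (hexp.mul (hw t ht)).congr_deriv (by ring)
  have hanti : AntitoneOn (fun s ↦ exp (K * s) * w s) (Ici 0) := by
    refine antitoneOn_of_hasDerivWithinAt_nonpos (convex_Ici 0)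
      (fun t ht ↦ (hderiv t ht).continuousAt.continuousWithinAt)
      (fun t ht ↦ (hderiv t (le_of_lt (by simpa using ht))).hasDerivWithinAt) fun t ht ↦ ?_
    have ht : 0 ≤ t := le_of_lt (by simpa using ht)
    exact mul_nonpos_of_nonneg_of_nonpos (exp_pos _).le (by linarith [hbound t ht])
  intro t ht
  have hweighted : exp (K * t) * w t ≤ 0 := by
    simpa using (hanti self_mem_Ici (mem_Ici.2 ht) ht).trans (by simpa using h0)
  exact nonpos_of_mul_nonpos_right hweighted (exp_pos _)

theorem riccati_sub_linear_le_neg_mul {K u v r₁ r₂ rh : ℝ} (hK : 0 ≤ K) (hge : rh ≤ r₁)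
    (hgap : K ≤ u - r₂) (hle : u ≤ r₁) :
    -((v - rh) * K) - -((u - r₁) * (u - r₂)) ≤ -K * (v - u) := by
  nlinarith [mul_le_mul_of_nonneg_left hgap (sub_nonneg.2 hle), mul_le_mul_of_nonneg_left hge hK]

theorem stmt_18_general (r₁ r₂ rh u v : ℝ → ℝ)
    (hu : ∀ t ≥ (0:ℝ), HasDerivAt u (-((u t - r₁ t) * (u t - r₂ t))) t)
    (hv : ∀ t ≥ (0:ℝ), HasDerivAt v (-((v t - rh t) * (Real.sqrt 2 - 1))) t)
    (hu0 : u 0 = 0) (hv0 : v 0 = 0)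
    (hge : ∀ t ≥ (0:ℝ), rh t ≤ r₁ t)
    (hgap : ∀ t ≥ (0:ℝ), Real.sqrt 2 - 1 ≤ u t - r₂ t)
    (hle : ∀ t ≥ (0:ℝ), u t ≤ r₁ t) :
    ∀ t ≥ (0:ℝ), v t ≤ u t := by
  have hK : 0 ≤ √2 - 1 := sub_nonneg.2 one_lt_sqrt_two.le
  have hdiff : ∀ t ≥ (0:ℝ), v t - u t ≤ 0 :=
    nonpos_of_hasDerivAt_le_neg_mul (w := fun t ↦ v t - u t) (√2 - 1)
      (fun t ht ↦ (hv t ht).sub (hu t ht))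
      (fun t ht ↦ riccati_sub_linear_le_neg_mul hK (hge t ht) (hgap t ht) (hle t ht))
      (by simp [hu0, hv0])
  exact fun t ht ↦ sub_nonpos.1 (hdiff t ht)

theorem stmt_18 (r₁ r₂ rh u v : ℝ → ℝ)
    (hr₁c : ContinuousOn r₁ (Set.Ici 0)) (hr₂c : ContinuousOn r₂ (Set.Ici 0))
    (hrhc : ContinuousOn rh (Set.Ici 0))
    (hu : ∀ t ≥ (0:ℝ), HasDerivAt u (-((u t - r₁ t) * (u t - r₂ t))) t)
    (hv : ∀ t ≥ (0:ℝ), HasDerivAt v (-((v t - rh t) * (Real.sqrt 2 - 1))) t)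
    (hu0 : u 0 = 0) (hv0 : v 0 = 0)
    (hge : ∀ t ≥ (0:ℝ), rh t ≤ r₁ t)
    (hgap : ∀ t ≥ (0:ℝ), Real.sqrt 2 - 1 ≤ u t - r₂ t)
    (hle : ∀ t ≥ (0:ℝ), u t ≤ r₁ t) :
    ∀ t ≥ (0:ℝ), v t ≤ u t :=
  stmt_18_general r₁ r₂ rh u v hu hv hu0 hv0 hge hgap hle
end
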